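/- Let m ≥ 1, d₀ ≥ 1, and ξ(y) = η(y) ln^m(1 + η(y)²/(2d₀)²) with η(y) = (y + (y²+(2d₀)²)^{1/2})/2. If x' < 0, then for any ω ∈ (0, 2d₀), Re(−i x' ξ(y + iω)) → −∞ as y → +∞ along the reals; if x' > 0 the same holds for any ω ∈ (−2d₀, 0). Moreover, the leading asymptotics is Re(−i x' ξ(y+iω)) ~ x' ω (2 ln y)^m. -/

import Mathlib

/-! With `c = 2d₀`, on the line `w = y + iω` we have `η(w) = w + O(1/y)`: the principal square
root `s` of `w² + c²` has nonnegative real part and `(s - w)(s + w) = c²`. Hence `B = 1 + η²/c²`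
is `y²/c² · (1 + o(1))` with `y · Im B / Re B → 2ω`, so `L = log B` has `Re L = 2 log y + O(1)`
and `arg L = o(1/y)`. In `Im(η L^m) = |L|^m (Re η · sin(m arg L) + Im η · cos(m arg L))` the first
term is then negligible because `Re η · arg L → 0`, leaving `Im(η L^m) ~ ω (2 log y)^m`, and
`Re(-i x' ξ) = x' Im ξ`. -/

open Complex Filter Set

noncomputable def eta3 (d₀ : ℝ) (y : ℂ) : ℂ :=
  (y + (y ^ 2 + ((2 * d₀ : ℝ) : ℂ) ^ 2) ^ ((1 : ℂ) / 2)) / 2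

noncomputable def xi3 (d₀ m : ℝ) (y : ℂ) : ℂ :=
  eta3 d₀ y * (Complex.log (1 + (eta3 d₀ y) ^ 2 / ((2 * d₀ : ℝ) : ℂ) ^ 2)) ^ (m : ℂ)

open Topology
open scoped Real

namespace Complex

lemma abs_arg_le_pi_div_two_mul {z : ℂ} (hz : 0 < z.re) : |arg z| ≤ π / 2 * (|z.im| / z.re) := by
  have hnorm : 0 < ‖z‖ := norm_pos_iff.2 fun h => by simp [h] at hz
  have hsin := Real.mul_abs_le_abs_sin (abs_arg_le_pi_div_two_iff.2 hz.le)
  rw [sin_arg, abs_div, abs_of_pos hnorm] at hsin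
  calc |arg z| = π / 2 * (2 / π * |arg z|) := by field_simp
    _ ≤ π / 2 * (|z.im| / ‖z‖) := by gcongr
    _ ≤ π / 2 * (|z.im| / z.re) := by gcongr; exact re_le_norm z

lemma im_mul_cpow_ofReal (w L : ℂ) (m : ℝ) :
    (w * L ^ (m : ℂ)).im = ‖L‖ ^ m * (w.re * Real.sin (arg L * m) + w.im * Real.cos (arg L * m)) := by
  rw [mul_im, cpow_ofReal_re, cpow_ofReal_im]
  ring

lemma re_cpow_one_div_two_nonneg (a : ℂ) : 0 ≤ (a ^ ((1 : ℂ) / 2)).re := by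
  rw [one_div, ← ofReal_ofNat, ← ofReal_inv, cpow_ofReal_re]
  refine mul_nonneg (by positivity) (Real.cos_nonneg_of_mem_Icc ⟨?_, ?_⟩)
  · nlinarith [neg_pi_lt_arg a, Real.pi_pos]
  · nlinarith [arg_le_pi a, Real.pi_pos]

lemma norm_cpow_one_div_two_sq_add_sub_le {w : ℂ} (hw : 0 < w.re) (k : ℂ) :
    ‖(w ^ 2 + k) ^ ((1 : ℂ) / 2) - w‖ ≤ ‖k‖ / w.re := by
  set s := (w ^ 2 + k) ^ ((1 : ℂ) / 2)
  have hsq : s ^ 2 = w ^ 2 + k := by simp [s, one_div]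
  have hre : w.re ≤ ‖s + w‖ := by
    have := re_cpow_one_div_two_nonneg (w ^ 2 + k)
    calc w.re ≤ (s + w).re := by simp only [add_re]; linarith
      _ ≤ ‖s + w‖ := re_le_norm _
  have hprod : (s - w) * (s + w) = k := by linear_combination hsq
  rw [le_div_iff₀ hw]
  calc ‖s - w‖ * w.re ≤ ‖s - w‖ * ‖s + w‖ := by gcongr
    _ = ‖k‖ := by rw [← norm_mul, hprod]

end Complex

lemma tendsto_eta3_sub (d₀ ω : ℝ) :
    Tendsto (fun y : ℝ => eta3 d₀ (y + I * ω) - (y + I * ω)) atTop (𝓝 0) := by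
  set k : ℂ := ((2 * d₀ : ℝ) : ℂ) ^ 2
  have hbound : Tendsto (fun y : ℝ => ‖k‖ / y / 2) atTop (𝓝 0) := by
    simpa using ((tendsto_const_nhds (x := ‖k‖)).div_atTop tendsto_id).div_const (2 : ℝ)
  refine squeeze_zero_norm' ?_ hbound
  filter_upwards [eventually_gt_atTop 0] with y hy
  have hre : (0 : ℝ) < ((y : ℂ) + I * ω).re := by simpa using hy
  calc ‖eta3 d₀ (y + I * ω) - (y + I * ω)‖
      = ‖((y + I * ω) ^ 2 + k) ^ ((1 : ℂ) / 2) - (y + I * ω)‖ / 2 := by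
        rw [← Complex.norm_two, ← norm_div, eta3]; congr 1; ring
    _ ≤ ‖k‖ / y / 2 := by
        gcongr
        simpa using norm_cpow_one_div_two_sq_add_sub_le hre k

lemma tendsto_mul_sin_mul {α : Type*} {l : Filter α} {a b : α → ℝ}
    (h : Tendsto (fun x => a x * b x) l (𝓝 0)) (m : ℝ) :
    Tendsto (fun x => a x * Real.sin (b x * m)) l (𝓝 0) := by
  refine squeeze_zero_norm (fun x => ?_) (by simpa using h.norm.mul_const |m|)
  simp only [Real.norm_eq_abs, abs_mul]
  calc |a x| * |Real.sin (b x * m)| ≤ |a x| * (|b x| * |m|) := by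
        gcongr; rw [← abs_mul]; exact Real.abs_sin_le_abs
    _ = |a x| * |b x| * |m| := by ring

lemma tendsto_ofReal_inv_atTop : Tendsto (fun y : ℝ => (y : ℂ)⁻¹) atTop (𝓝 0) := by
  simpa [Function.comp_def] using (continuous_ofReal.tendsto 0).comp tendsto_inv_atTop_zero

section Asymptotics

variable {f : ℝ → ℂ} {ω c : ℝ}

lemma tendsto_div_ofReal_self (hf : Tendsto (fun y : ℝ => f y - (y + I * ω)) atTop (𝓝 0)) :
    Tendsto (fun y : ℝ => f y / y) atTop (𝓝 1) := by
  have h : Tendsto (fun y : ℝ => 1 + (I * ω + (f y - (y + I * ω))) * (y : ℂ)⁻¹) atTop (𝓝 1) := by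
    simpa using tendsto_const_nhds.add ((tendsto_const_nhds.add hf).mul tendsto_ofReal_inv_atTop)
  refine h.congr' ?_
  filter_upwards [eventually_ne_atTop 0] with y hy
  have hy' : (y : ℂ) ≠ 0 := ofReal_ne_zero.2 hy
  field_simp
  ring

lemma tendsto_re_div_self (hf : Tendsto (fun y : ℝ => f y - (y + I * ω)) atTop (𝓝 0)) :
    Tendsto (fun y : ℝ => (f y).re / y) atTop (𝓝 1) := by
  simpa [Function.comp_def] using (continuous_re.tendsto 1).comp (tendsto_div_ofReal_self hf)

lemma tendsto_im_of_tendsto_sub (hf : Tendsto (fun y : ℝ => f y - (y + I * ω)) atTop (𝓝 0)) :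
    Tendsto (fun y : ℝ => (f y).im) atTop (𝓝 ω) := by
  simpa using ((continuous_im.tendsto 0).comp hf).const_add ω

lemma tendsto_one_add_sq_div_sq_div_sq
    (hf : Tendsto (fun y : ℝ => f y - (y + I * ω)) atTop (𝓝 0)) :
    Tendsto (fun y : ℝ => (1 + f y ^ 2 / (c : ℂ) ^ 2) / (y : ℂ) ^ 2) atTop
      (𝓝 ((c : ℂ) ^ 2)⁻¹) := by
  have h : Tendsto (fun y : ℝ => ((y : ℂ)⁻¹) ^ 2 + (f y / y) ^ 2 / (c : ℂ) ^ 2) atTop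
      (𝓝 ((c : ℂ) ^ 2)⁻¹) := by
    simpa using (tendsto_ofReal_inv_atTop.pow 2).add
      (((tendsto_div_ofReal_self hf).pow 2).div_const ((c : ℂ) ^ 2))
  refine h.congr' ?_
  filter_upwards [eventually_ne_atTop 0] with y hy
  have hy' : (y : ℂ) ≠ 0 := ofReal_ne_zero.2 hy
  field_simp

lemma tendsto_re_one_add_sq_div_sq_div_sq
    (hf : Tendsto (fun y : ℝ => f y - (y + I * ω)) atTop (𝓝 0)) :
    Tendsto (fun y : ℝ => (1 + f y ^ 2 / (c : ℂ) ^ 2).re / y ^ 2) atTop (𝓝 (c ^ 2)⁻¹) := by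
  have h := (continuous_re.tendsto _).comp (tendsto_one_add_sq_div_sq_div_sq (c := c) hf)
  simpa [Function.comp_def, ← ofReal_pow, ← ofReal_inv] using h

lemma tendsto_norm_one_add_sq_div_sq_div_sq
    (hf : Tendsto (fun y : ℝ => f y - (y + I * ω)) atTop (𝓝 0)) :
    Tendsto (fun y : ℝ => ‖1 + f y ^ 2 / (c : ℂ) ^ 2‖ / y ^ 2) atTop (𝓝 (c ^ 2)⁻¹) := by
  have h := (continuous_norm.tendsto _).comp (tendsto_one_add_sq_div_sq_div_sq (c := c) hf)
  simpa [Function.comp_def, norm_div, sq_abs] using h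

lemma eventually_re_one_add_sq_div_sq_pos (hc : c ≠ 0)
    (hf : Tendsto (fun y : ℝ => f y - (y + I * ω)) atTop (𝓝 0)) :
    ∀ᶠ y : ℝ in atTop, 0 < (1 + f y ^ 2 / (c : ℂ) ^ 2).re := by
  filter_upwards [(tendsto_re_one_add_sq_div_sq_div_sq hf).eventually_const_lt (by positivity),
    eventually_ne_atTop 0] with y h hy
  exact (div_pos_iff_of_pos_right (by positivity)).1 h

lemma tendsto_mul_im_div_re_one_add_sq_div_sq (hc : c ≠ 0)
    (hf : Tendsto (fun y : ℝ => f y - (y + I * ω)) atTop (𝓝 0)) :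
    Tendsto (fun y : ℝ => y * (1 + f y ^ 2 / (c : ℂ) ^ 2).im / (1 + f y ^ 2 / (c : ℂ) ^ 2).re)
      atTop (𝓝 (2 * ω)) := by
  have h := ((((tendsto_re_div_self hf).const_mul 2).mul
    (tendsto_im_of_tendsto_sub hf)).div_const (c ^ 2)).div
    (tendsto_re_one_add_sq_div_sq_div_sq hf) (by positivity)
  rw [show 2 * 1 * ω / c ^ 2 / (c ^ 2)⁻¹ = 2 * ω by field_simp] at h
  refine h.congr' ?_
  filter_upwards [eventually_ne_atTop 0] with y hy
  have him : (1 + f y ^ 2 / (c : ℂ) ^ 2).im = 2 * (f y).re * (f y).im / c ^ 2 := by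
    rw [← ofReal_pow, add_im, one_im, div_ofReal_im, sq, mul_im]
    ring
  rw [Pi.div_apply, him]
  field_simp

lemma tendsto_re_log_sub_two_mul_log (hc : c ≠ 0)
    (hf : Tendsto (fun y : ℝ => f y - (y + I * ω)) atTop (𝓝 0)) :
    Tendsto (fun y : ℝ => (log (1 + f y ^ 2 / (c : ℂ) ^ 2)).re - 2 * Real.log y) atTop
      (𝓝 (Real.log (c ^ 2)⁻¹)) := by
  have h := (Real.continuousAt_log (by positivity : (c ^ 2)⁻¹ ≠ 0)).tendsto.comp
    (tendsto_norm_one_add_sq_div_sq_div_sq (c := c) hf)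
  refine h.congr' ?_
  filter_upwards [eventually_re_one_add_sq_div_sq_pos hc hf, eventually_ne_atTop 0] with y hB hy
  rw [Function.comp_apply, log_re, Real.log_div (hB.trans_le (re_le_norm _)).ne' (pow_ne_zero 2 hy),
    Real.log_pow]
  push_cast
  ring

lemma tendsto_re_log_atTop (hc : c ≠ 0)
    (hf : Tendsto (fun y : ℝ => f y - (y + I * ω)) atTop (𝓝 0)) :
    Tendsto (fun y : ℝ => (log (1 + f y ^ 2 / (c : ℂ) ^ 2)).re) atTop atTop := by
  simpa using (tendsto_re_log_sub_two_mul_log hc hf).add_atTop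
    (Real.tendsto_log_atTop.const_mul_atTop two_pos)

lemma tendsto_norm_log_div_two_mul_log (hc : c ≠ 0)
    (hf : Tendsto (fun y : ℝ => f y - (y + I * ω)) atTop (𝓝 0)) :
    Tendsto (fun y : ℝ => ‖log (1 + f y ^ 2 / (c : ℂ) ^ 2)‖ / (2 * Real.log y)) atTop (𝓝 1) := by
  rw [tendsto_iff_norm_sub_tendsto_zero]
  have hbound : Tendsto (fun y : ℝ =>
      (|(log (1 + f y ^ 2 / (c : ℂ) ^ 2)).re - 2 * Real.log y| + π) / (2 * Real.log y))
      atTop (𝓝 0) :=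
    ((tendsto_re_log_sub_two_mul_log hc hf).abs.add_const π).div_atTop
      (Real.tendsto_log_atTop.const_mul_atTop two_pos)
  refine squeeze_zero' (Eventually.of_forall fun _ => norm_nonneg _) ?_ hbound
  filter_upwards [eventually_gt_atTop 1] with y hy
  have hℓ : 0 < 2 * Real.log y := by have := Real.log_pos hy; positivity
  set L := log (1 + f y ^ 2 / (c : ℂ) ^ 2) with hL
  rw [Real.norm_eq_abs, div_sub_one hℓ.ne', abs_div, abs_of_pos hℓ]
  gcongr
  calc |‖L‖ - 2 * Real.log y| = |‖L‖ - ‖((2 * Real.log y : ℝ) : ℂ)‖| := by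
        rw [norm_real, Real.norm_of_nonneg hℓ.le]
    _ ≤ ‖L - (2 * Real.log y : ℝ)‖ := abs_norm_sub_norm_le _ _
    _ ≤ |(L - (2 * Real.log y : ℝ)).re| + |(L - (2 * Real.log y : ℝ)).im| :=
        norm_le_abs_re_add_abs_im _
    _ ≤ |L.re - 2 * Real.log y| + π := by
        rw [sub_re, ofReal_re, sub_im, ofReal_im, sub_zero, hL, log_im]
        gcongr
        exact abs_arg_le_pi _

lemma tendsto_mul_arg_log (hc : c ≠ 0)
    (hf : Tendsto (fun y : ℝ => f y - (y + I * ω)) atTop (𝓝 0)) :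
    Tendsto (fun y : ℝ => y * arg (log (1 + f y ^ 2 / (c : ℂ) ^ 2))) atTop (𝓝 0) := by
  have hbound := (((tendsto_mul_im_div_re_one_add_sq_div_sq hc hf).abs.const_mul
    ((π / 2) ^ 2)).div_atTop (tendsto_re_log_atTop hc hf))
  refine squeeze_zero_norm' ?_ hbound
  filter_upwards [eventually_re_one_add_sq_div_sq_pos hc hf,
    (tendsto_re_log_atTop hc hf).eventually_gt_atTop 0, eventually_gt_atTop 0] with y hB hL hy
  set B := 1 + f y ^ 2 / (c : ℂ) ^ 2
  calc ‖y * arg (log B)‖ = y * |arg (log B)| := by rw [Real.norm_eq_abs, abs_mul, abs_of_pos hy]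
    _ ≤ y * (π / 2 * (|(log B).im| / (log B).re)) := by
        gcongr; exact abs_arg_le_pi_div_two_mul hL
    _ ≤ y * (π / 2 * ((π / 2 * (|B.im| / B.re)) / (log B).re)) := by
        gcongr; rw [log_im]; exact abs_arg_le_pi_div_two_mul hB
    _ = (π / 2) ^ 2 * |y * B.im / B.re| / (log B).re := by
        rw [abs_div, abs_mul, abs_of_pos hy, abs_of_pos hB]; ring

lemma tendsto_im_mul_log_cpow_div (hc : c ≠ 0)
    (hf : Tendsto (fun y : ℝ => f y - (y + I * ω)) atTop (𝓝 0)) (m : ℝ) :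
    Tendsto (fun y : ℝ => (f y * log (1 + f y ^ 2 / (c : ℂ) ^ 2) ^ (m : ℂ)).im /
      (2 * Real.log y) ^ m) atTop (𝓝 ω) := by
  have hyarg := tendsto_mul_arg_log hc hf
  have harg : Tendsto (fun y : ℝ => arg (log (1 + f y ^ 2 / (c : ℂ) ^ 2))) atTop (𝓝 0) := by
    have h := hyarg.mul tendsto_inv_atTop_zero
    rw [zero_mul] at h
    refine h.congr' ?_
    filter_upwards [eventually_ne_atTop 0] with y hy
    field_simp
  have hcos : Tendsto (fun y : ℝ => Real.cos (arg (log (1 + f y ^ 2 / (c : ℂ) ^ 2)) * m))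
      atTop (𝓝 1) := by
    simpa [Function.comp_def] using (Real.continuous_cos.tendsto _).comp (harg.mul_const m)
  have hnorm := (tendsto_norm_log_div_two_mul_log hc hf).rpow_const (p := m) (Or.inl one_ne_zero)
  have h := hnorm.mul (((tendsto_re_div_self hf).mul (tendsto_mul_sin_mul hyarg m)).add
    ((tendsto_im_of_tendsto_sub hf).mul hcos))
  rw [Real.one_rpow, mul_zero, zero_add, mul_one, one_mul] at h
  refine h.congr' ?_
  filter_upwards [eventually_gt_atTop 1] with y hy
  have hℓ : 0 < 2 * Real.log y := by have := Real.log_pos hy; positivity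
  rw [im_mul_cpow_ofReal, Real.div_rpow (norm_nonneg _) hℓ.le]
  field_simp

end Asymptotics

/-- If x' < 0 and ω ∈ (0, 2d₀) (resp. x' > 0 and ω ∈ (−2d₀, 0)), then
Re(−i x' ξ(y + iω)) → −∞ as y → +∞ along ℝ, with leading asymptotics
Re(−i x' ξ(y+iω)) ~ x' ω (2 ln y)^m. -/
theorem stmt_3 (d₀ m x' ω : ℝ) (hd₀ : 1 ≤ d₀) (hm : 1 ≤ m)
    (hsign : (x' < 0 ∧ ω ∈ Set.Ioo (0 : ℝ) (2 * d₀)) ∨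
             (0 < x' ∧ ω ∈ Set.Ioo (-(2 * d₀)) (0 : ℝ))) :
    Tendsto (fun y : ℝ =>
        (-Complex.I * (x' : ℂ) * xi3 d₀ m ((y : ℂ) + Complex.I * (ω : ℂ))).re)
      atTop atBot ∧
    Tendsto (fun y : ℝ =>
        (-Complex.I * (x' : ℂ) * xi3 d₀ m ((y : ℂ) + Complex.I * (ω : ℂ))).re /
          (x' * ω * (2 * Real.log y) ^ m))
      atTop (nhds 1) := by
  have hxω : x' * ω < 0 := by
    rcases hsign with ⟨hx, hω, -⟩ | ⟨hx, -, hω⟩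
    · exact mul_neg_of_neg_of_pos hx hω
    · exact mul_neg_of_pos_of_neg hx hω
  have him : Tendsto (fun y : ℝ => (xi3 d₀ m (y + I * ω)).im / (2 * Real.log y) ^ m)
      atTop (𝓝 ω) :=
    tendsto_im_mul_log_cpow_div (by positivity) (tendsto_eta3_sub d₀ ω) m
  have hlog : Tendsto (fun y : ℝ => (2 * Real.log y) ^ m) atTop atTop :=
    (tendsto_rpow_atTop (by linarith)).comp (Real.tendsto_log_atTop.const_mul_atTop two_pos)
  have hre (y : ℝ) : (-I * x' * xi3 d₀ m (y + I * ω)).re = x' * (xi3 d₀ m (y + I * ω)).im := by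
    simp
  simp only [hre]
  constructor
  · refine ((him.const_mul x').neg_mul_atTop hxω hlog).congr' ?_
    filter_upwards [hlog.eventually_gt_atTop 0] with y hy
    field_simp
  · have hω : ω ≠ 0 := right_ne_zero_of_mul hxω.ne
    have h := him.div_const ω
    rw [div_self hω] at h
    refine h.congr' (Eventually.of_forall fun y => ?_)
    field_simp [left_ne_zero_of_mul hxω.ne]
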